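/- The function E*_n(t) = (π/3)(2π(n−1)+t)^(-2) · ((t+3π)/(2π))_{n−1} / ((t+2π)/(2π))_{n−1}, where (a)_k denotes the Pochhammer rising factorial, is strictly decreasing in t for t ≥ 2π, for each fixed n ≥ 1. -/

import Mathlib

open Real Polynomial

/-- The error model
`E*ₙ(t) = (π/3)(2π(n−1)+t)⁻² · ((t+3π)/(2π))_{n−1} / ((t+2π)/(2π))_{n−1}`,
where `(a)_k` is the Pochhammer rising factorial. -/
noncomputable def Estar (n : ℕ) (t : ℝ) : ℝ :=
  π / 3 / (2 * π * ((n : ℝ) - 1) + t) ^ 2 *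
    ((ascPochhammer ℝ (n - 1)).eval ((t + 3 * π) / (2 * π))) /
    ((ascPochhammer ℝ (n - 1)).eval ((t + 2 * π) / (2 * π)))

lemma ascPoch_eval_prod (m : ℕ) (x : ℝ) :
    (ascPochhammer ℝ m).eval x = ∏ k ∈ Finset.range m, (x + k) := by
  induction m with
  | zero => simp
  | succ m ih => rw [ascPochhammer_succ_eval, Finset.prod_range_succ, ih]

noncomputable def g (n : ℕ) (t : ℝ) : ℝ :=
  ∏ k ∈ Finset.range (n - 1), (t + 2 * π * (k + 1) + π) / (t + 2 * π * (k + 1))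

lemma Estar_eq (n : ℕ) (t : ℝ) (ht : 0 < t) :
    Estar n t = π / 3 * g n t / (2 * π * ((n : ℝ) - 1) + t) ^ 2 := by
  have hπ : (0:ℝ) < π := pi_pos
  unfold Estar g
  rw [ascPoch_eval_prod, ascPoch_eval_prod, mul_div_assoc, ← Finset.prod_div_distrib]
  have : ∀ k ∈ Finset.range (n - 1),
      ((t + 3 * π) / (2 * π) + (k:ℝ)) / ((t + 2 * π) / (2 * π) + (k:ℝ)) =
      (t + 2 * π * ((k:ℝ) + 1) + π) / (t + 2 * π * ((k:ℝ) + 1)) := by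
    intro k _
    have hk : (0:ℝ) < t + 2 * π * ((k:ℝ) + 1) := by positivity
    rw [div_eq_div_iff (by positivity) hk.ne']
    field_simp
    ring
  rw [Finset.prod_congr rfl this]
  ring

lemma g_pos (n : ℕ) (t : ℝ) (ht : 0 < t) : 0 < g n t := by
  have hπ : (0:ℝ) < π := pi_pos
  exact Finset.prod_pos fun k _ => by positivity

/-- For each fixed `n ≥ 1`, `E*ₙ` is strictly decreasing in `t` on `t ≥ 2π`. -/
theorem Estar_strictAnti (n : ℕ) (hn : 1 ≤ n) :
    StrictAntiOn (Estar n) (Set.Ici (2 * π)) := by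
  intro s hs t ht hst
  have hπ : (0:ℝ) < π := pi_pos
  have hs0 : 0 < s := lt_of_lt_of_le (by positivity) hs
  have ht0 : 0 < t := lt_of_lt_of_le (by positivity) ht
  rw [Estar_eq n s hs0, Estar_eq n t ht0]
  have hn1 : (0:ℝ) ≤ (n : ℝ) - 1 := by
    have : (1:ℝ) ≤ (n:ℝ) := by exact_mod_cast hn
    linarith
  have hBs : 0 < 2 * π * ((n : ℝ) - 1) + s := by nlinarith
  have hBt : 0 < 2 * π * ((n : ℝ) - 1) + t := by nlinarith
  have hB : (2 * π * ((n : ℝ) - 1) + s) ^ 2 < (2 * π * ((n : ℝ) - 1) + t) ^ 2 := by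
    nlinarith
  have hgle : g n t ≤ g n s := by
    apply Finset.prod_le_prod
    · intro k _
      have hk : (0:ℝ) < t + 2 * π * ((k:ℝ) + 1) := by positivity
      positivity
    · intro k _
      have hks : (0:ℝ) < s + 2 * π * ((k:ℝ) + 1) := by positivity
      have hkt : (0:ℝ) < t + 2 * π * ((k:ℝ) + 1) := by positivity
      rw [div_le_div_iff₀ hkt hks]
      nlinarith
  have h1 : π / 3 * g n t / (2 * π * ((n : ℝ) - 1) + t) ^ 2 ≤
      π / 3 * g n s / (2 * π * ((n : ℝ) - 1) + t) ^ 2 := by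
    apply div_le_div_of_nonneg_right ?_ (by positivity) |>.trans_eq rfl
    · nlinarith [g_pos n t ht0]
  have h2 : π / 3 * g n s / (2 * π * ((n : ℝ) - 1) + t) ^ 2 <
      π / 3 * g n s / (2 * π * ((n : ℝ) - 1) + s) ^ 2 := by
    apply div_lt_div_of_pos_left
    · have := g_pos n s hs0; positivity
    · positivity
    · exact hB
  exact lt_of_le_of_lt h1 h2
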